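/- arXiv:2207.08926 — 2 statements merged into one kernel-verified Lean document; each statement's English description precedes it below -/
import Mathlib

section
/- With the notation of the context, an object X of 𝒟 lies in the tilted heart 𝒟_υ^♥ := 𝒟_υ^{≤0} ∩ 𝒟_υ^{≥0} if and only if there exists a distinguished triangle F[1] → X → T → F[2] in 𝒟 with F ∈ ℱ and T ∈ 𝒯. -/
open CategoryTheory CategoryTheory.Limits CategoryTheory.Pretriangulated

universe v u

variable (C : Type u) [Category.{v} C] [HasZeroObject C] [Preadditive C] [HasShift C ℤ]
  [∀ n : ℤ, (shiftFunctor C n).Additive] [Pretriangulated C]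

/-- A t-structure on a pretriangulated category `C`, given by the two isomorphism-closed
classes `le` (the objects of `𝒟^{≤0}`) and `ge` (the objects of `𝒟^{≥0}`).  With the
convention that `X ∈ 𝒟^{≤n} ↔ le (X⟦n⟧)` and `X ∈ 𝒟^{≥n} ↔ ge (X⟦n⟧)`, the axioms read:
`𝒟^{≤-1} ⊆ 𝒟^{≤0}` (equivalently `𝒟^{≤0}[1] ⊆ 𝒟^{≤0}`), `𝒟^{≥1} ⊆ 𝒟^{≥0}` (equivalently
`𝒟^{≥0}[-1] ⊆ 𝒟^{≥0}`), `Hom(X, Y) = 0` for `X ∈ 𝒟^{≤0}` and `Y ∈ 𝒟^{≥1}`, and every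
object sits in a distinguished triangle `A → X → B → A[1]` with `A ∈ 𝒟^{≤0}`,
`B ∈ 𝒟^{≥1}`. -/
structure TStruct where
  /-- the class `𝒟^{≤0}` -/
  le : C → Prop
  /-- the class `𝒟^{≥0}` -/
  ge : C → Prop
  le_iso_closed : ∀ {X Y : C}, (X ≅ Y) → le X → le Y
  ge_iso_closed : ∀ {X Y : C}, (X ≅ Y) → ge X → ge Y
  le_shift : ∀ X : C, le X → le (X⟦(1 : ℤ)⟧)
  ge_shift : ∀ X : C, ge X → ge (X⟦(-1 : ℤ)⟧)
  hom_vanish : ∀ {X Y : C}, le X → ge (Y⟦(1 : ℤ)⟧) → ∀ f : X ⟶ Y, f = 0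
  exists_triangle : ∀ X : C, ∃ (A B : C) (f : A ⟶ X) (g : X ⟶ B) (h : B ⟶ A⟦(1 : ℤ)⟧),
    (Triangle.mk f g h ∈ distTriang C) ∧ le A ∧ ge (B⟦(1 : ℤ)⟧)

variable {C}

/-- The heart `𝒟^♥ = 𝒟^{≤0} ∩ 𝒟^{≥0}` of a t-structure. -/
def TStruct.heart (t : TStruct C) (X : C) : Prop := t.le X ∧ t.ge X

/-- A torsion pair `(𝒯, ℱ)` on the heart of a t-structure: two isomorphism-closed classes
of objects of the heart such that `Hom(T, F) = 0` for `T ∈ 𝒯`, `F ∈ ℱ`, and every object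
of the heart sits in a distinguished triangle `T → X → F → T[1]` with `T ∈ 𝒯`, `F ∈ ℱ`
(i.e. a short exact sequence `0 → T → X → F → 0` in the heart). -/
structure HeartTorsionPair (t : TStruct C) where
  /-- the torsion class -/
  torsion : C → Prop
  /-- the torsion-free class -/
  free : C → Prop
  torsion_mem_heart : ∀ X : C, torsion X → t.heart X
  free_mem_heart : ∀ X : C, free X → t.heart X
  torsion_iso_closed : ∀ {X Y : C}, (X ≅ Y) → torsion X → torsion Y
  free_iso_closed : ∀ {X Y : C}, (X ≅ Y) → free X → free Y
  hom_vanish : ∀ {T F : C}, torsion T → free F → ∀ f : T ⟶ F, f = 0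
  exists_triangle : ∀ X : C, t.heart X →
    ∃ (T F : C) (f : T ⟶ X) (g : X ⟶ F) (h : F ⟶ T⟦(1 : ℤ)⟧),
      (Triangle.mk f g h ∈ distTriang C) ∧ torsion T ∧ free F

/-- The connective part `𝒟_υ^{≤0}` of the tilting of a t-structure `t` with respect to a
torsion class `torsion` on its heart: those `X ∈ 𝒟^{≤0}` fitting in a distinguished
triangle `A → X → T → A[1]` with `A ∈ 𝒟^{≤-1}` and `T` torsion. -/
def TiltLE (t : TStruct C) (torsion : C → Prop) (X : C) : Prop :=
  t.le X ∧ ∃ (A T : C) (f : A ⟶ X) (g : X ⟶ T) (h : T ⟶ A⟦(1 : ℤ)⟧),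
    (Triangle.mk f g h ∈ distTriang C) ∧ t.le (A⟦(-1 : ℤ)⟧) ∧ torsion T

/-- The coconnective part `𝒟_υ^{≥0}` of the tilting of a t-structure `t` with respect to a
torsion-free class `free` on its heart: those `X ∈ 𝒟^{≥-1}` fitting in a distinguished
triangle `F[1] → X → B → F[2]` with `F` torsion-free and `B ∈ 𝒟^{≥0}`. -/
def TiltGE (t : TStruct C) (free : C → Prop) (X : C) : Prop :=
  t.ge (X⟦(-1 : ℤ)⟧) ∧ ∃ (F B : C) (f : F⟦(1 : ℤ)⟧ ⟶ X) (g : X ⟶ B)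
    (h : B ⟶ (F⟦(1 : ℤ)⟧)⟦(1 : ℤ)⟧),
    (Triangle.mk f g h ∈ distTriang C) ∧ free F ∧ t.ge B

/-!
For `⇐`, the aisle and coaisle of `t` are closed under extensions (a truncation triangle of the
middle term degenerates by Hom-vanishing), which places `X` in both tilted classes with the
given triangle as witness. For `⇒`, the third term `B` of the `𝒟_υ^{≥0}`-triangle
`F[1] → X → B` lies in the heart, and every map from `B` to a torsion-free object vanishes,
because it vanishes on `X` (as `Hom(𝒟_υ^{≤0}, ℱ) = 0`) and on `F[2]`; hence the torsion-free
quotient of `B` is zero and `B` is torsion.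
-/

namespace CategoryTheory.Pretriangulated

variable {T : Triangle C} (hT : T ∈ distTriang C)
include hT

lemma eq_zero_of_mor₁_comp_eq_zero {Y : C} {φ : T.obj₂ ⟶ Y}
    (hφ : T.mor₁ ≫ φ = 0) (h₃ : ∀ ψ : T.obj₃ ⟶ Y, ψ = 0) : φ = 0 := by
  obtain ⟨ψ, rfl⟩ := T.yoneda_exact₂ hT φ hφ
  rw [h₃ ψ, comp_zero]

lemma eq_zero_of_comp_mor₂_eq_zero {Y : C} {φ : Y ⟶ T.obj₂}
    (hφ : φ ≫ T.mor₂ = 0) (h₁ : ∀ ψ : Y ⟶ T.obj₁, ψ = 0) : φ = 0 := by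
  obtain ⟨ψ, rfl⟩ := T.coyoneda_exact₂ hT φ hφ
  rw [h₁ ψ, zero_comp]

lemma isZero₃_of_mor₂_eq_zero (h₂ : T.mor₂ = 0)
    (h : ∀ ψ : T.obj₁⟦(1 : ℤ)⟧ ⟶ T.obj₃, ψ = 0) : IsZero T.obj₃ := by
  rw [IsZero.iff_id_eq_zero]
  exact eq_zero_of_mor₁_comp_eq_zero (rot_of_distTriang _ hT)
    (by rw [Triangle.rotate_mor₁, h₂]; exact zero_comp) h

lemma isZero₁_of_mor₁_eq_zero (h₁ : T.mor₁ = 0)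
    (h : ∀ ψ : T.obj₁ ⟶ T.obj₃⟦(-1 : ℤ)⟧, ψ = 0) : IsZero T.obj₁ := by
  rw [IsZero.iff_id_eq_zero]
  exact eq_zero_of_comp_mor₂_eq_zero (inv_rot_of_distTriang _ hT)
    (by rw [Triangle.invRotate_mor₂, h₁]; exact comp_zero) h

end CategoryTheory.Pretriangulated

namespace TStruct

variable (t : TStruct C)

lemma le_shift_shift_iff {a b : ℤ} (hab : a + b = 0) {X : C} : t.le (X⟦a⟧⟦b⟧) ↔ t.le X :=
  ⟨t.le_iso_closed ((shiftFunctorCompIsoId C a b hab).app X),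
    t.le_iso_closed ((shiftFunctorCompIsoId C a b hab).app X).symm⟩

lemma ge_shift_shift_iff {a b : ℤ} (hab : a + b = 0) {X : C} : t.ge (X⟦a⟧⟦b⟧) ↔ t.ge X :=
  ⟨t.ge_iso_closed ((shiftFunctorCompIsoId C a b hab).app X),
    t.ge_iso_closed ((shiftFunctorCompIsoId C a b hab).app X).symm⟩

lemma hom_eq_zero_of_le_shift_neg_one {X Y : C} (hX : t.le (X⟦(-1 : ℤ)⟧)) (hY : t.ge Y)
    (f : X ⟶ Y) : f = 0 :=
  (shiftFunctor C (-1 : ℤ)).map_injective <| by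
    rw [Functor.map_zero]
    exact t.hom_vanish hX ((t.ge_shift_shift_iff (by norm_num)).2 hY) _

variable {t}

lemma le_of_distTriang {T : Triangle C} (hT : T ∈ distTriang C) (h₁ : t.le T.obj₁)
    (h₃ : t.le T.obj₃) : t.le T.obj₂ := by
  obtain ⟨A, B, f, g, h, hdt, hA, hB⟩ := t.exists_triangle T.obj₂
  have hg : g = 0 :=
    eq_zero_of_mor₁_comp_eq_zero hT (t.hom_vanish h₁ hB _) (t.hom_vanish h₃ hB)
  have hB₀ : IsZero B :=
    isZero₃_of_mor₂_eq_zero hdt hg (t.hom_vanish (t.le_shift A hA) hB)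
  have : IsIso f := ((Triangle.mk f g h).isZero₃_iff_isIso₁ hdt).1 hB₀
  exact t.le_iso_closed (asIso f) hA

lemma ge_of_distTriang {T : Triangle C} (hT : T ∈ distTriang C) (h₁ : t.ge T.obj₁)
    (h₃ : t.ge T.obj₃) : t.ge T.obj₂ := by
  obtain ⟨A, B, f, g, h, hdt, hA, hB⟩ := t.exists_triangle (T.obj₂⟦(-1 : ℤ)⟧)
  have hf : f = 0 :=
    eq_zero_of_comp_mor₂_eq_zero (T.shift_distinguished hT (-1))
      (t.hom_vanish hA ((t.ge_shift_shift_iff (by norm_num)).2 h₃) _)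
      (t.hom_vanish hA ((t.ge_shift_shift_iff (by norm_num)).2 h₁))
  have hB' : t.ge B := (t.ge_shift_shift_iff (by norm_num)).1 (t.ge_shift _ hB)
  have hA₀ : IsZero A :=
    isZero₁_of_mor₁_eq_zero hdt hf
      (t.hom_vanish hA ((t.ge_shift_shift_iff (by norm_num)).2 hB'))
  have : IsIso g := ((Triangle.mk f g h).isZero₁_iff_isIso₂ hdt).1 hA₀
  exact (t.ge_shift_shift_iff (by norm_num)).1
    (t.ge_iso_closed ((shiftFunctor C (1 : ℤ)).mapIso (asIso g)).symm hB)

end TStruct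

namespace HeartTorsionPair

variable {t : TStruct C} (tp : HeartTorsionPair t)

lemma hom_eq_zero_of_tiltLE {X F : C} (hX : TiltLE t tp.torsion X) (hF : tp.free F)
    (φ : X ⟶ F) : φ = 0 := by
  obtain ⟨-, A, T, f, g, h, hdt, hA, hT⟩ := hX
  exact eq_zero_of_mor₁_comp_eq_zero hdt
    (t.hom_eq_zero_of_le_shift_neg_one hA (tp.free_mem_heart F hF).2 _) (tp.hom_vanish hT hF)

lemma torsion_of_hom_eq_zero {B : C} (hB : t.heart B)
    (h : ∀ F, tp.free F → ∀ φ : B ⟶ F, φ = 0) : tp.torsion B := by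
  obtain ⟨T, F, f, g, h', hdt, hT, hF⟩ := tp.exists_triangle B hB
  have hF₀ : IsZero F :=
    isZero₃_of_mor₂_eq_zero hdt (h F hF g)
      (t.hom_eq_zero_of_le_shift_neg_one
        ((t.le_shift_shift_iff (by norm_num)).2 (tp.torsion_mem_heart T hT).1)
        (tp.free_mem_heart F hF).2)
  have : IsIso f := ((Triangle.mk f g h').isZero₃_iff_isIso₁ hdt).1 hF₀
  exact tp.torsion_iso_closed (asIso f) hT

end HeartTorsionPair

/-- An object `X` lies in the tilted heart `𝒟_υ^♥ = 𝒟_υ^{≤0} ∩ 𝒟_υ^{≥0}` if and only if it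
fits into a distinguished triangle `F[1] → X → T → F[2]` with `F ∈ ℱ` and `T ∈ 𝒯`. -/
theorem mem_tilted_heart_iff (t : TStruct C) (tp : HeartTorsionPair t) (X : C) :
    (TiltLE t tp.torsion X ∧ TiltGE t tp.free X) ↔
      ∃ (F T : C) (f : F⟦(1 : ℤ)⟧ ⟶ X) (g : X ⟶ T) (h : T ⟶ (F⟦(1 : ℤ)⟧)⟦(1 : ℤ)⟧),
        (Triangle.mk f g h ∈ distTriang C) ∧ tp.free F ∧ tp.torsion T := by
  constructor
  · rintro ⟨hle, -, F, B, f, g, h, hdt, hF, hB⟩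
    have hFh := tp.free_mem_heart F hF
    have hrot := rot_of_distTriang _ hdt
    have hBh : t.heart B :=
      ⟨TStruct.le_of_distTriang hrot hle.1 (t.le_shift _ (t.le_shift _ hFh.1)), hB⟩
    have hBtor : tp.torsion B := tp.torsion_of_hom_eq_zero hBh fun F' hF' φ =>
      eq_zero_of_mor₁_comp_eq_zero hrot (tp.hom_eq_zero_of_tiltLE hle hF' _)
        (t.hom_eq_zero_of_le_shift_neg_one
          ((t.le_shift_shift_iff (by norm_num)).2 (t.le_shift _ hFh.1))
          (tp.free_mem_heart F' hF').2)
    exact ⟨F, B, f, g, h, hdt, hF, hBtor⟩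
  · rintro ⟨F, T, f, g, h, hdt, hF, hT⟩
    have hFh := tp.free_mem_heart F hF
    have hTh := tp.torsion_mem_heart T hT
    have hXle : t.le X := TStruct.le_of_distTriang hdt (t.le_shift F hFh.1) hTh.1
    have hXge : t.ge (X⟦(-1 : ℤ)⟧) :=
      TStruct.ge_of_distTriang (Triangle.shift_distinguished _ hdt (-1))
        ((t.ge_shift_shift_iff (by norm_num)).2 hFh.2) (t.ge_shift T hTh.2)
    exact ⟨⟨hXle, _, _, f, g, h, hdt, (t.le_shift_shift_iff (by norm_num)).2 hFh.1, hT⟩,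
      hXge, F, T, f, g, h, hdt, hF, hTh.2⟩
end

section
/- Let τ₁ = (𝒟₁^{≤0}, 𝒟₁^{≥0}) and τ₂ = (𝒟₂^{≤0}, 𝒟₂^{≥0}) be two t-structures on a pretriangulated category 𝒟, with hearts 𝒟^{♥₁} and 𝒟^{♥₂}. Then the inclusions 𝒟₁^{≤-1} ⊆ 𝒟₂^{≤0} ⊆ 𝒟₁^{≤0} hold if and only if the following two conditions hold for the classes 𝒯 := 𝒟^{♥₁} ∩ 𝒟₂^{≤0} and ℱ := 𝒟^{♥₁} ∩ 𝒟₂^{≥1}: (a) (𝒯, ℱ) is a torsion pair on the heart 𝒟^{♥₁}, i.e. Hom_𝒟(T, F) = 0 for all T ∈ 𝒯, F ∈ ℱ, and every X ∈ 𝒟^{♥₁} fits into a distinguished triangle T → X → F → T[1] with T ∈ 𝒯 and F ∈ ℱ; and (b) τ₂ is the tilting of τ₁ with respect to (𝒯, ℱ): 𝒟₂^{≤0} = {X ∈ 𝒟₁^{≤0} : there exists a distinguished triangle A → X → T → A[1] with A ∈ 𝒟₁^{≤-1} and T ∈ 𝒯} and 𝒟₂^{≥0} = {X ∈ 𝒟₁^{≥-1}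 : there exists a distinguished triangle F[1] → X → B → F[2] with F ∈ ℱ and B ∈ 𝒟₁^{≥0}}. -/
open CategoryTheory CategoryTheory.Limits CategoryTheory.Pretriangulated

universe v u

variable (C : Type u) [Category.{v} C] [HasZeroObject C] [Preadditive C] [HasShift C ℤ]
  [∀ n : ℤ, (shiftFunctor C n).Additive] [Pretriangulated C]

variable {C}

/-!
By orthogonality, `𝒟₁^{≤-1} ⊆ 𝒟₂^{≤0} ⊆ 𝒟₁^{≤0}` gives `𝒟₁^{≥1} ⊆ 𝒟₂^{≥1} ⊆ 𝒟₁^{≥0}`. For `X` in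
the heart of `τ₁`, both ends of the `τ₂`-truncation triangle `τ₂^{≤0}X → X → τ₂^{≥1}X` lie in
the heart of `τ₁` by closure under extensions, which gives the torsion pair. For `X ∈ 𝒟₂^{≤0}`
or `X ∈ 𝒟₂^{≥0}`, the `τ₁`-truncation triangle `τ₁^{≤-1}X → X → τ₁^{≥0}X` exhibits `X` as an
object of the tilt. Conversely, for `X ∈ 𝒟₁^{≤-1}` the triangle `X → X → 0` puts `X` in the
tilt of `𝒟₁^{≤0}`.
-/

open CategoryTheory.Triangulated ZeroObject

namespace CategoryTheory.Pretriangulated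

lemma distinguished_of_iso_obj₁ {A A' X B : C} (e : A' ≅ A) {f : A ⟶ X}
    {g : X ⟶ B} {h : B ⟶ A⟦(1 : ℤ)⟧} (hT : Triangle.mk f g h ∈ distTriang C) :
    Triangle.mk (e.hom ≫ f) g (h ≫ e.inv⟦(1 : ℤ)⟧') ∈ distTriang C :=
  -- `simp` does not see through the projections of `Triangle.mk`, hence the `show`s.
  isomorphic_distinguished _ hT _ (Triangle.isoMk _ _ e (Iso.refl X) (Iso.refl B)
    (show (e.hom ≫ f) ≫ 𝟙 X = e.hom ≫ f by simp) (show g ≫ 𝟙 B = 𝟙 X ≫ g by simp)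
    (show (h ≫ e.inv⟦(1 : ℤ)⟧') ≫ e.hom⟦(1 : ℤ)⟧' = 𝟙 B ≫ h by simp [← Functor.map_comp]))

end CategoryTheory.Pretriangulated

namespace CategoryTheory.Triangulated.TStructure

lemma ge_le_ge_of_le_le {t t' : TStructure C} {a₀ a₁ b₀ b₁ : ℤ} (ha : a₀ + 1 = a₁)
    (hb : b₀ + 1 = b₁) (h : t'.le b₀ ≤ t.le a₀) : t.ge a₁ ≤ t'.ge b₁ := by
  intro Y hY
  rw [ge_iff_isGE, t'.isGE_iff_orthogonal b₀ b₁ hb]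
  intro W f hW
  exact t.zero_of_isLE_of_isGE f a₀ a₁ (by lia) ⟨h _ hW.le⟩ ⟨hY⟩

lemma isGE_of_le_le {t t' : TStructure C} (h : t'.le 0 ≤ t.le 0) (X : C) (n : ℤ)
    [t.IsGE X n] : t'.IsGE X n :=
  have := t.isGE_shift X n (n - 1) 1
  have : t'.IsGE (X⟦n - 1⟧) 1 := ⟨ge_le_ge_of_le_le rfl rfl h _ (t.ge_of_isGE _ 1)⟩
  t'.isGE_of_shift X n (n - 1) 1

end CategoryTheory.Triangulated.TStructure

namespace TStruct

variable (t : TStruct C)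

/-- `X ∈ 𝒟^{≤n}` is read as `t.le (X⟦n⟧)`, so that `t.toTStructure.le (-1) X` is
definitionally `t.le (X⟦-1⟧)`. -/
noncomputable def toTStructure : TStructure C where
  le n X := t.le (X⟦n⟧)
  ge n X := t.ge (X⟦n⟧)
  le_isClosedUnderIsomorphisms n := ⟨fun e hX => t.le_iso_closed ((shiftFunctor C n).mapIso e) hX⟩
  ge_isClosedUnderIsomorphisms n := ⟨fun e hX => t.ge_iso_closed ((shiftFunctor C n).mapIso e) hX⟩
  le_shift n a n' h X hX := t.le_iso_closed ((shiftFunctorAdd' C a n' n h).app X) hX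
  ge_shift n a n' h X hX := t.ge_iso_closed ((shiftFunctorAdd' C a n' n h).app X) hX
  zero' X Y f hX hY := by
    rw [← Preadditive.IsIso.comp_left_eq_zero ((shiftFunctorZero C ℤ).hom.app X)]
    exact t.hom_vanish hX hY _
  le_zero_le X hX := t.le_shift _ (t.le_iso_closed ((shiftFunctorZero C ℤ).app X) hX)
  ge_one_le X hX := t.ge_iso_closed
    ((shiftShiftNeg X (1 : ℤ)).trans ((shiftFunctorZero C ℤ).app X).symm) (t.ge_shift _ hX)
  exists_triangle_zero_one A := by
    obtain ⟨X, Y, f, g, h, hT, hX, hY⟩ := t.exists_triangle A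
    exact ⟨X, Y, t.le_iso_closed ((shiftFunctorZero C ℤ).app X).symm hX, hY, f, g, h, hT⟩

variable {t}

lemma le_iff_isLE_zero {X : C} : t.le X ↔ t.toTStructure.IsLE X 0 :=
  ⟨fun h => ⟨t.le_iso_closed ((shiftFunctorZero C ℤ).app X).symm h⟩,
    fun h => t.le_iso_closed ((shiftFunctorZero C ℤ).app X) h.le⟩

lemma ge_iff_isGE_zero {X : C} : t.ge X ↔ t.toTStructure.IsGE X 0 :=
  ⟨fun h => ⟨t.ge_iso_closed ((shiftFunctorZero C ℤ).app X).symm h⟩,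
    fun h => t.ge_iso_closed ((shiftFunctorZero C ℤ).app X) h.ge⟩

lemma toTStructure_le_zero : t.toTStructure.le 0 = t.le := by
  ext X
  rw [TStructure.le_iff_isLE, ← le_iff_isLE_zero]

lemma heart_iff_isLE_isGE {X : C} :
    t.heart X ↔ t.toTStructure.IsLE X 0 ∧ t.toTStructure.IsGE X 0 := by
  rw [heart, le_iff_isLE_zero, ge_iff_isGE_zero]

lemma heart_zero : t.heart 0 :=
  heart_iff_isLE_isGE.2 ⟨inferInstance, inferInstance⟩

variable {t₁ t₂ : TStruct C}

lemma exists_distTriang_torsion_free (h₁ : t₁.toTStructure.le (-1) ≤ t₂.toTStructure.le 0)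
    (h₂ : t₂.toTStructure.le 0 ≤ t₁.toTStructure.le 0) {X : C} (hX : t₁.heart X) :
    ∃ (T F : C) (f : T ⟶ X) (g : X ⟶ F) (h : F ⟶ T⟦(1 : ℤ)⟧),
      (Triangle.mk f g h ∈ distTriang C) ∧ (t₁.heart T ∧ t₂.le T) ∧
        (t₁.heart F ∧ t₂.ge (F⟦(1 : ℤ)⟧)) := by
  set τ₁ := t₁.toTStructure
  set τ₂ := t₂.toTStructure
  obtain ⟨hX_le, hX_ge⟩ := heart_iff_isLE_isGE.1 hX
  obtain ⟨T, F, hT, hF, f, g, h, hd⟩ := τ₂.exists_triangle X 0 1 rfl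
  have hT_le : τ₁.IsLE T 0 := ⟨h₂ _ hT⟩
  have hF_ge : τ₁.IsGE F 0 := ⟨TStructure.ge_le_ge_of_le_le rfl rfl h₁ _ hF⟩
  have hT_shift : τ₁.IsLE (T⟦(1 : ℤ)⟧) 0 :=
    have := τ₁.isLE_shift T 0 1 (-1)
    τ₁.isLE_of_le _ (-1) 0
  have hF_shift : τ₁.IsGE (F⟦(-1 : ℤ)⟧) 0 :=
    have := τ₁.isGE_shift F 0 (-1) 1
    τ₁.isGE_of_ge _ 0 1
  have hF_le : τ₁.IsLE F 0 := τ₁.isLE₂ _ (rot_of_distTriang _ hd) 0 hX_le hT_shift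
  have hT_ge : τ₁.IsGE T 0 := τ₁.isGE₂ _ (inv_rot_of_distTriang _ hd) 0 hF_shift hX_ge
  exact ⟨T, F, f, g, h, hd, ⟨heart_iff_isLE_isGE.2 ⟨hT_le, hT_ge⟩, le_iff_isLE_zero.2 ⟨hT⟩⟩,
    heart_iff_isLE_isGE.2 ⟨hF_le, hF_ge⟩, hF⟩

lemma le_iff_tiltLE (h₁ : t₁.toTStructure.le (-1) ≤ t₂.toTStructure.le 0)
    (h₂ : t₂.toTStructure.le 0 ≤ t₁.toTStructure.le 0) (X : C) :
    t₂.le X ↔ TiltLE t₁ (fun T => t₁.heart T ∧ t₂.le T) X := by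
  set τ₁ := t₁.toTStructure
  set τ₂ := t₂.toTStructure
  rw [le_iff_isLE_zero]
  constructor
  · intro hX
    have hX₁ : τ₁.IsLE X 0 := ⟨h₂ _ hX.le⟩
    obtain ⟨A, T, hA, hT, f, g, h, hd⟩ := τ₁.exists_triangle X (-1) 0 (by norm_num)
    have hA_shift : τ₁.IsLE (A⟦(1 : ℤ)⟧) (-1) :=
      have : τ₁.IsLE A (-1) := ⟨hA⟩
      have := τ₁.isLE_shift A (-1) 1 (-2)
      τ₁.isLE_of_le _ (-2) (-1)
    have hT₁ : τ₁.IsLE T 0 :=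
      τ₁.isLE₂ _ (rot_of_distTriang _ hd) 0 hX₁ (τ₁.isLE_of_le (A⟦(1 : ℤ)⟧) (-1) 0)
    have hT₂ : τ₂.IsLE T 0 := τ₂.isLE₂ _ (rot_of_distTriang _ hd) 0 hX ⟨h₁ _ hA_shift.le⟩
    exact ⟨le_iff_isLE_zero.2 hX₁, A, T, f, g, h, hd, hA,
      heart_iff_isLE_isGE.2 ⟨hT₁, ⟨hT⟩⟩, le_iff_isLE_zero.2 hT₂⟩
  · rintro ⟨-, A, T, f, g, h, hd, hA, -, hT⟩
    exact τ₂.isLE₂ _ hd 0 ⟨h₁ _ hA⟩ (le_iff_isLE_zero.1 hT)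

lemma ge_iff_tiltGE (h₁ : t₁.toTStructure.le (-1) ≤ t₂.toTStructure.le 0)
    (h₂ : t₂.toTStructure.le 0 ≤ t₁.toTStructure.le 0) (X : C) :
    t₂.ge X ↔ TiltGE t₁ (fun F => t₁.heart F ∧ t₂.ge (F⟦(1 : ℤ)⟧)) X := by
  set τ₁ := t₁.toTStructure
  set τ₂ := t₂.toTStructure
  rw [ge_iff_isGE_zero]
  constructor
  · intro hX
    have hX₁ : τ₁.IsGE X (-1) :=
      have := τ₂.isGE_shift X 0 (-1) 1
      have : τ₁.IsGE (X⟦(-1 : ℤ)⟧) 0 :=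
        ⟨TStructure.ge_le_ge_of_le_le rfl (by norm_num) h₁ _ (τ₂.ge_of_isGE _ 1)⟩
      τ₁.isGE_of_shift X (-1) (-1) 0
    obtain ⟨A, B, hA, hB, f, g, h, hd⟩ := τ₁.exists_triangle X (-1) 0 (by norm_num)
    have : τ₁.IsGE B 0 := ⟨hB⟩
    have := τ₁.isGE_shift B 0 (-1) 1
    have hA₁ : τ₁.IsGE A (-1) :=
      τ₁.isGE₂ _ (inv_rot_of_distTriang _ hd) (-1) (τ₁.isGE_of_ge (B⟦(-1 : ℤ)⟧) (-1) 1) hX₁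
    have hA₂ : τ₂.IsGE A 0 :=
      have := TStructure.isGE_of_le_le h₂ (B⟦(-1 : ℤ)⟧) 1
      τ₂.isGE₂ _ (inv_rot_of_distTriang _ hd) 0 (τ₂.isGE_of_ge (B⟦(-1 : ℤ)⟧) 0 1) hX
    exact ⟨hX₁.ge, A⟦(-1 : ℤ)⟧, B, _, g, _, distinguished_of_iso_obj₁ (shiftNegShift A (1 : ℤ)) hd,
      ⟨⟨hA, hA₁.ge⟩, (τ₂.isGE_shift A 0 (-1) 1).ge⟩, ge_iff_isGE_zero.2 ⟨hB⟩⟩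
  · rintro ⟨-, F, B, f, g, h, hd, ⟨-, hF⟩, hB⟩
    have : τ₂.IsGE F 1 := ⟨hF⟩
    have := ge_iff_isGE_zero.1 hB
    exact τ₂.isGE₂ _ hd 0 (τ₂.isGE_shift F 1 1 0) (TStructure.isGE_of_le_le h₂ B 0)

lemma tiltLE_of_le_shift_neg_one {torsion : C → Prop} (h₀ : torsion 0) {X : C}
    (hX : t.le (X⟦(-1 : ℤ)⟧)) : TiltLE t torsion X :=
  have : t.toTStructure.IsLE X (-1) := ⟨hX⟩
  ⟨le_iff_isLE_zero.2 (t.toTStructure.isLE_of_le X (-1) 0), X, 0, 𝟙 X, 0, 0,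
    contractible_distinguished X, hX, h₀⟩

end TStruct

/-- Polishchuk's lemma: two t-structures `τ₁, τ₂` satisfy
`𝒟₁^{≤-1} ⊆ 𝒟₂^{≤0} ⊆ 𝒟₁^{≤0}` if and only if, setting `𝒯 := 𝒟^{♥₁} ∩ 𝒟₂^{≤0}` and
`ℱ := 𝒟^{♥₁} ∩ 𝒟₂^{≥1}`, the pair `(𝒯, ℱ)` is a torsion pair on the heart of `τ₁` and
`τ₂` is the tilting of `τ₁` with respect to `(𝒯, ℱ)`.
(Here `X ∈ 𝒟₁^{≤-1} ↔ X⟦-1⟧ ∈ 𝒟₁^{≤0}` and `X ∈ 𝒟₂^{≥1} ↔ X⟦1⟧ ∈ 𝒟₂^{≥0}`.) -/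
theorem tStructure_tilting_iff (t₁ t₂ : TStruct C) :
    ((∀ X : C, t₁.le (X⟦(-1 : ℤ)⟧) → t₂.le X) ∧ (∀ X : C, t₂.le X → t₁.le X)) ↔
    ((∀ {T F : C}, (t₁.heart T ∧ t₂.le T) → (t₁.heart F ∧ t₂.ge (F⟦(1 : ℤ)⟧)) →
        ∀ f : T ⟶ F, f = 0) ∧
     (∀ X : C, t₁.heart X →
        ∃ (T F : C) (f : T ⟶ X) (g : X ⟶ F) (h : F ⟶ T⟦(1 : ℤ)⟧),
          (Triangle.mk f g h ∈ distTriang C) ∧ (t₁.heart T ∧ t₂.le T) ∧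
            (t₁.heart F ∧ t₂.ge (F⟦(1 : ℤ)⟧))) ∧
     (∀ X : C, t₂.le X ↔ TiltLE t₁ (fun T => t₁.heart T ∧ t₂.le T) X) ∧
     (∀ X : C, t₂.ge X ↔ TiltGE t₁ (fun F => t₁.heart F ∧ t₂.ge (F⟦(1 : ℤ)⟧)) X)) := by
  constructor
  · rintro ⟨h₁, h₂⟩
    rw [← t₂.toTStructure_le_zero] at h₁ h₂
    rw [← t₁.toTStructure_le_zero] at h₂
    exact ⟨fun hT hF f => t₂.hom_vanish hT.2 hF.2 f,
      fun _ hX => TStruct.exists_distTriang_torsion_free h₁ h₂ hX,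
      TStruct.le_iff_tiltLE h₁ h₂, TStruct.ge_iff_tiltGE h₁ h₂⟩
  · rintro ⟨-, -, hle, -⟩
    exact ⟨fun X hX => (hle X).2 (TStruct.tiltLE_of_le_shift_neg_one
        ⟨t₁.heart_zero, t₂.le_iff_isLE_zero.2 inferInstance⟩ hX),
      fun X hX => ((hle X).1 hX).1⟩
end
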